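/- (Theorem 2, identity.) Under the random coin toss assumption, Assumption 3, and Assumption 4, the conditional probability that the first two children have the same sex, given that the family has at least 3 children, equals μ((A ∩ B) ∪ (Aᶜ ∩ Bᶜ) | N3) = (p_M^2 + p_F^2) · 1/(2·p_F·p_M·(p_D/p_S) + p_F^2 + p_M^2). -/
import Mathlib


open MeasureTheory

/-- Conditional probability: μ(X | Y) = μ(X ∩ Y) / μ(Y), as a real number. -/
noncomputable def cp {Ω : Type*} [MeasurableSpace Ω] (μ : Measure Ω) (X Y : Set Ω) : ℝ :=
  (μ (X ∩ Y)).toReal / (μ Y).toReal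

lemma split_aux {Ω : Type*} [MeasurableSpace Ω] (μ : Measure Ω) [IsProbabilityMeasure μ]
    (s t : Set Ω) (ht : MeasurableSet t) :
    (μ (s ∩ t)).toReal + (μ (s ∩ tᶜ)).toReal = (μ s).toReal := by
  rw [← ENNReal.toReal_add (measure_ne_top μ _) (measure_ne_top μ _), ← Set.diff_eq,
    measure_inter_add_diff s ht]

set_option maxHeartbeats 1000000 in
/-- Theorem 2, identity: under the random coin toss assumption,
Assumption 3, and Assumption 4,
μ((A∩B) ∪ (Aᶜ∩Bᶜ) | N3) = (p_M² + p_F²) · 1/(2·p_F·p_M·(p_D/p_S) + p_F² + p_M²). -/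
theorem stmt_10 {Ω : Type*} [MeasurableSpace Ω] (μ : Measure Ω) [IsProbabilityMeasure μ]
(A B N2 N3 : Set Ω)
    (hAm : MeasurableSet A) (hBm : MeasurableSet B)
    (hN2m : MeasurableSet N2) (hN3m : MeasurableSet N3)
    (hsub : N3 ⊆ N2)
    (pM pF : ℝ) (hpM0 : 0 < pM) (hpM1 : pM < 1) (hpF : pF = 1 - pM)
    -- Assumption 1 (random coin toss):
    (h1 : (μ A).toReal = pM)
    (h2a : cp μ B (N2 ∩ A) = pM) (h2b : cp μ B (N2 ∩ Aᶜ) = pM)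
    -- Assumption 3:
    (h3 : cp μ N2 A = (μ N2).toReal)
    -- Assumption 4:
    (pS pD : ℝ) (hpS0 : 0 < pS) (hpS1 : pS ≤ 1) (hpD0 : 0 < pD) (hpD1 : pD ≤ 1)
    (h4a : cp μ N3 (N2 ∩ A ∩ B) = pS) (h4b : cp μ N3 (N2 ∩ Aᶜ ∩ Bᶜ) = pS)
    (h4c : cp μ N3 (N2 ∩ A ∩ Bᶜ) = pD) (h4d : cp μ N3 (N2 ∩ Aᶜ ∩ B) = pD)
    -- positivity of all conditioning events appearing:
    (posA : 0 < (μ A).toReal) (posN2 : 0 < (μ N2).toReal) (posN3 : 0 < (μ N3).toReal)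
    (posN2A : 0 < (μ (N2 ∩ A)).toReal) (posN2Ac : 0 < (μ (N2 ∩ Aᶜ)).toReal)
    (posN2AB : 0 < (μ (N2 ∩ A ∩ B)).toReal) (posN2AcBc : 0 < (μ (N2 ∩ Aᶜ ∩ Bᶜ)).toReal)
    (posN2ABc : 0 < (μ (N2 ∩ A ∩ Bᶜ)).toReal) (posN2AcB : 0 < (μ (N2 ∩ Aᶜ ∩ B)).toReal) :
    cp μ ((A ∩ B) ∪ (Aᶜ ∩ Bᶜ)) N3 =
      (pM ^ 2 + pF ^ 2) * (1 / (2 * pF * pM * (pD / pS) + pF ^ 2 + pM ^ 2)) := by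
  simp only [cp] at h2a h2b h3 h4a h4b h4c h4d ⊢
  set n2 := (μ N2).toReal with hn2
  -- basic values
  have hN2A : (μ (N2 ∩ A)).toReal = n2 * pM := by
    rw [div_eq_iff posA.ne'] at h3; rw [h3, h1]
  have hN2Ac : (μ (N2 ∩ Aᶜ)).toReal = n2 * pF := by
    have := split_aux μ N2 A hAm
    rw [hN2A] at this; rw [hpF]; linarith
  have hQ1 : (μ (N2 ∩ A ∩ B)).toReal = n2 * pM * pM := by
    rw [div_eq_iff posN2A.ne'] at h2a
    have he : B ∩ (N2 ∩ A) = N2 ∩ A ∩ B := by ext x; simp only [Set.mem_inter_iff]; tauto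
    rw [he] at h2a; rw [h2a, hN2A]; ring
  have hQ2 : (μ (N2 ∩ A ∩ Bᶜ)).toReal = n2 * pM * pF := by
    have := split_aux μ (N2 ∩ A) B hBm
    rw [hQ1, hN2A] at this; rw [hpF]; nlinarith [this]
  have hQ3 : (μ (N2 ∩ Aᶜ ∩ B)).toReal = n2 * pF * pM := by
    rw [div_eq_iff posN2Ac.ne'] at h2b
    have he : B ∩ (N2 ∩ Aᶜ) = N2 ∩ Aᶜ ∩ B := by ext x; simp only [Set.mem_inter_iff]; tauto
    rw [he] at h2b; rw [h2b, hN2Ac]; ring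
  have hQ4 : (μ (N2 ∩ Aᶜ ∩ Bᶜ)).toReal = n2 * pF * pF := by
    have := split_aux μ (N2 ∩ Aᶜ) B hBm
    rw [hQ3, hN2Ac] at this; nlinarith [this]
  -- N3 pieces
  rw [div_eq_iff posN2AB.ne'] at h4a
  rw [div_eq_iff posN2AcBc.ne'] at h4b
  rw [div_eq_iff posN2ABc.ne'] at h4c
  rw [div_eq_iff posN2AcB.ne'] at h4d
  rw [hQ1] at h4a; rw [hQ4] at h4b; rw [hQ2] at h4c; rw [hQ3] at h4d
  -- identify N3 pieces with the conditioned sets (using N3 ⊆ N2)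
  have e1 : N3 ∩ A ∩ B = N3 ∩ (N2 ∩ A ∩ B) := by
    ext x; have h := @hsub x; simp only [Set.mem_inter_iff]; tauto
  have e2 : N3 ∩ A ∩ Bᶜ = N3 ∩ (N2 ∩ A ∩ Bᶜ) := by
    ext x; have h := @hsub x; simp only [Set.mem_inter_iff]; tauto
  have e3 : N3 ∩ Aᶜ ∩ B = N3 ∩ (N2 ∩ Aᶜ ∩ B) := by
    ext x; have h := @hsub x; simp only [Set.mem_inter_iff]; tauto
  have e4 : N3 ∩ Aᶜ ∩ Bᶜ = N3 ∩ (N2 ∩ Aᶜ ∩ Bᶜ) := by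
    ext x; have h := @hsub x; simp only [Set.mem_inter_iff]; tauto
  -- decompose μ N3
  have t0 := split_aux μ N3 A hAm
  have t1 := split_aux μ (N3 ∩ A) B hBm
  have t2 := split_aux μ (N3 ∩ Aᶜ) B hBm
  rw [e1, e2] at t1; rw [e3, e4] at t2
  rw [h4a, h4c] at t1; rw [h4d, h4b] at t2
  have hN3val : (μ N3).toReal =
      pS * (n2 * pM * pM) + pD * (n2 * pM * pF) + pD * (n2 * pF * pM) + pS * (n2 * pF * pF) := by
    linarith
  -- numerator
  have hd : Disjoint (A ∩ B ∩ N3) (Aᶜ ∩ Bᶜ ∩ N3) := by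
    rw [Set.disjoint_left]; rintro x ⟨⟨ha, -⟩, -⟩ ⟨⟨ha', -⟩, -⟩; exact ha' ha
  have hu : (A ∩ B ∪ Aᶜ ∩ Bᶜ) ∩ N3 = (A ∩ B ∩ N3) ∪ (Aᶜ ∩ Bᶜ ∩ N3) := by
    ext x; simp only [Set.mem_inter_iff, Set.mem_union]; tauto
  have hm2 : MeasurableSet (Aᶜ ∩ Bᶜ ∩ N3) := (hAm.compl.inter hBm.compl).inter hN3m
  have hnum : (μ ((A ∩ B ∪ Aᶜ ∩ Bᶜ) ∩ N3)).toReal =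
      (μ (A ∩ B ∩ N3)).toReal + (μ (Aᶜ ∩ Bᶜ ∩ N3)).toReal := by
    rw [hu, measure_union hd hm2,
      ENNReal.toReal_add (measure_ne_top μ _) (measure_ne_top μ _)]
  have e1' : A ∩ B ∩ N3 = N3 ∩ (N2 ∩ A ∩ B) := by
    ext x; have h := @hsub x; simp only [Set.mem_inter_iff]; tauto
  have e4' : Aᶜ ∩ Bᶜ ∩ N3 = N3 ∩ (N2 ∩ Aᶜ ∩ Bᶜ) := by
    ext x; have h := @hsub x; simp only [Set.mem_inter_iff]; tauto
  rw [e1', e4'] at hnum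
  rw [hnum, h4a, h4b, hN3val]
  -- positivity facts for the algebra
  have hpF0 : 0 < pF := by rw [hpF]; linarith
  have hn2pos : 0 < n2 := posN2
  have hden : 0 < 2 * pF * pM * (pD / pS) + pF ^ 2 + pM ^ 2 := by positivity
  have hden2 : pS * (n2 * pM * pM) + pD * (n2 * pM * pF) + pD * (n2 * pF * pM)
      + pS * (n2 * pF * pF) > 0 := by positivity
  field_simp
  ring
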